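/- With the sequences T_a as defined for n ≥ 1: for each a ∈ {1,…,n}, the sequences T_a and T_{n+a} have equal 2nd, 5th, 8th and 11th terms; moreover, the multiset of all terms T_a(j) for 1 ≤ a ≤ 2n, 1 ≤ j ≤ 12, after identifying the duplicated 2nd/5th/8th/11th terms of each pair (T_a, T_{n+a}), is exactly the set {1, 2, …, 20n}, i.e., every integer in [1,20n] occurs among the terms, integers in [2n+1,4n] ∪ [16n+1,18n] occur exactly twice, and all other integers in [1,20n] occur exactly once. -/
import Mathlib

set_option linter.unusedVariables false
set_option linter.unreachableTactic false
set_option linter.unusedTactic false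

private lemma iff1 (p m a : ℤ) : p + a = m ↔ a = m - p := by omega
private lemma iff1' (p m a : ℤ) : p - a = m ↔ a = p - m := by omega
private lemma iff2 (p m a : ℤ) : p + 2*a = m ↔ 2*a = m - p := by omega
private lemma iff2' (p m a : ℤ) : p - 2*a = m ↔ 2*a = p - m := by omega

private lemma cnt (lo hi x : ℤ) (P : ℤ → Prop) [DecidablePred P]
    (h : ∀ a, lo ≤ a → a ≤ hi → (P a ↔ a = x)) :
    ((Finset.Icc lo hi).filter P).card = if lo ≤ x ∧ x ≤ hi then 1 else 0 := by
  have h1 : (Finset.Icc lo hi).filter P = (Finset.Icc lo hi).filter (· = x) :=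
    Finset.filter_congr (fun a ha => by
      simp only [Finset.mem_Icc] at ha; simpa using h a ha.1 ha.2)
  rw [h1, Finset.filter_eq']
  by_cases hx : x ∈ Finset.Icc lo hi
  · rw [if_pos hx, if_pos (by simpa [Finset.mem_Icc] using hx)]; simp
  · rw [if_neg hx, if_neg (by simpa [Finset.mem_Icc] using hx)]; simp

private lemma cnt2 (lo hi y : ℤ) (P : ℤ → Prop) [DecidablePred P]
    (h : ∀ a, lo ≤ a → a ≤ hi → (P a ↔ 2*a = y)) :
    ((Finset.Icc lo hi).filter P).card = if 2 ∣ y ∧ lo ≤ y/2 ∧ y/2 ≤ hi then 1 else 0 := by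
  by_cases hd : 2 ∣ y
  · rw [cnt lo hi (y/2) P (fun a h1 h2 => by rw [h a h1 h2]; omega)]
    simp [hd]
  · rw [if_neg (by tauto)]
    have hz : ∀ a ∈ Finset.Icc lo hi, ¬ P a := fun a ha => by
      simp only [Finset.mem_Icc] at ha; rw [h a ha.1 ha.2]; omega
    rw [Finset.filter_false_of_mem hz]; simp

private lemma i_one {c : Prop} [Decidable c] {x : ℕ} (h : x = if c then 1 else 0)
    (hc : c) : x = 1 := by rw [h, if_pos hc]

private lemma i_zero {c : Prop} [Decidable c] {x : ℕ} (h : x = if c then 1 else 0)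
    (hc : ¬ c) : x = 0 := by rw [h, if_neg hc]

private lemma i_pair {c d e : Prop} [Decidable c] [Decidable d] [Decidable e] {x y : ℕ}
    (h1 : x = if c then 1 else 0) (h2 : y = if d then 1 else 0)
    (hce : c → e) (hde : d → e) (hecd : e → (c ↔ ¬ d)) :
    x + y = if e then 1 else 0 := by
  rw [h1, h2]; split_ifs <;> first | rfl | omega | tauto

private lemma card_split (n : ℤ) (hn : 1 ≤ n) (P : ℤ → Prop) [DecidablePred P] :
    ((Finset.Icc 1 (2*n)).filter P).card =
      ((Finset.Icc 1 n).filter P).card + ((Finset.Icc (n+1) (2*n)).filter P).card := by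
  have hu : Finset.Icc (1:ℤ) (2*n) = Finset.Icc 1 n ∪ Finset.Icc (n+1) (2*n) := by
    ext x; simp only [Finset.mem_Icc, Finset.mem_union]; omega
  rw [hu, Finset.filter_union, Finset.card_union_of_disjoint]
  apply Finset.disjoint_filter_filter
  rw [Finset.disjoint_left]
  intro x hx hx'
  simp only [Finset.mem_Icc] at hx hx'
  omega

set_option maxHeartbeats 4000000 in
private lemma assemble (n m : ℤ) (hn : 1 ≤ n) (hm1 : 1 ≤ m) (hm2 : m ≤ 20*n)
    (cE1 cE2 cE3 cE4 cE5 cE6 cE7 cE8 cE9 cE10 cE11 cE12 cF1 cF2 cF3 cF4 cF5 cF6 cF7 cF8 cF9 cF10 cF11 cF12 : ℕ)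
    (hE1 : cE1 = if (1 ≤ m ∧ m ≤ n) then 1 else 0)
    (hE2 : cE2 = if (1 ≤ m - (16*n) ∧ m - (16*n) ≤ n) then 1 else 0)
    (hE3 : cE3 = if (2 ∣ (14*n + 1 - m) ∧ 1 ≤ (14*n + 1 - m)/2 ∧ (14*n + 1 - m)/2 ≤ n) then 1 else 0)
    (hE4 : cE4 = if (2 ∣ (m - (6*n)) ∧ 1 ≤ (m - (6*n))/2 ∧ (m - (6*n))/2 ≤ n) then 1 else 0)
    (hE5 : cE5 = if (1 ≤ 18*n + 1 - m ∧ 18*n + 1 - m ≤ n) then 1 else 0)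
    (hE6 : cE6 = if (1 ≤ 6*n + 1 - m ∧ 6*n + 1 - m ≤ n) then 1 else 0)
    (hE7 : cE7 = if (1 ≤ m - (14*n) ∧ m - (14*n) ≤ n) then 1 else 0)
    (hE8 : cE8 = if (1 ≤ m - (2*n) ∧ m - (2*n) ≤ n) then 1 else 0)
    (hE9 : cE9 = if (2 ∣ (14*n + 2 - m) ∧ 1 ≤ (14*n + 2 - m)/2 ∧ (14*n + 2 - m)/2 ≤ n) then 1 else 0)
    (hE10 : cE10 = if (2 ∣ (m - (6*n - 1)) ∧ 1 ≤ (m - (6*n - 1))/2 ∧ (m - (6*n - 1))/2 ≤ n) then 1 else 0)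
    (hE11 : cE11 = if (1 ≤ 4*n + 1 - m ∧ 4*n + 1 - m ≤ n) then 1 else 0)
    (hE12 : cE12 = if (1 ≤ 20*n + 1 - m ∧ 20*n + 1 - m ≤ n) then 1 else 0)
    (hF1 : cF1 = if (n+1 ≤ m - (3*n) ∧ m - (3*n) ≤ 2*n) then 1 else 0)
    (hF2 : cF2 = if (n+1 ≤ m - (15*n) ∧ m - (15*n) ≤ 2*n) then 1 else 0)
    (hF3 : cF3 = if (2 ∣ (12*n + 2 - m) ∧ n+1 ≤ (12*n + 2 - m)/2 ∧ (12*n + 2 - m)/2 ≤ 2*n) then 1 else 0)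
    (hF4 : cF4 = if (2 ∣ (m - (8*n - 1)) ∧ n+1 ≤ (m - (8*n - 1))/2 ∧ (m - (8*n - 1))/2 ≤ 2*n) then 1 else 0)
    (hF5 : cF5 = if (n+1 ≤ 19*n + 1 - m ∧ 19*n + 1 - m ≤ 2*n) then 1 else 0)
    (hF6 : cF6 = if (n+1 ≤ 3*n + 1 - m ∧ 3*n + 1 - m ≤ 2*n) then 1 else 0)
    (hF7 : cF7 = if (n+1 ≤ m - (17*n) ∧ m - (17*n) ≤ 2*n) then 1 else 0)
    (hF8 : cF8 = if (n+1 ≤ m - (n) ∧ m - (n) ≤ 2*n) then 1 else 0)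
    (hF9 : cF9 = if (2 ∣ (12*n + 1 - m) ∧ n+1 ≤ (12*n + 1 - m)/2 ∧ (12*n + 1 - m)/2 ≤ 2*n) then 1 else 0)
    (hF10 : cF10 = if (2 ∣ (m - (8*n)) ∧ n+1 ≤ (m - (8*n))/2 ∧ (m - (8*n))/2 ≤ 2*n) then 1 else 0)
    (hF11 : cF11 = if (n+1 ≤ 5*n + 1 - m ∧ 5*n + 1 - m ≤ 2*n) then 1 else 0)
    (hF12 : cF12 = if (n+1 ≤ 17*n + 1 - m ∧ 17*n + 1 - m ≤ 2*n) then 1 else 0)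
    :
    (cE1 + cF1) + ((cE2 + cF2) + ((cE3 + cF3) + ((cE4 + cF4) + ((cE5 + cF5) + ((cE6 + cF6) + ((cE7 + cF7) + ((cE8 + cF8) + ((cE9 + cF9) + ((cE10 + cF10) + ((cE11 + cF11) + ((cE12 + cF12)))))))))))) =
      if (2*n + 1 ≤ m ∧ m ≤ 4*n) ∨ (16*n + 1 ≤ m ∧ m ≤ 18*n) then 2 else 1 := by
  have P1 := i_pair hE4 hE10 (e := 6*n+1 ≤ m ∧ m ≤ 8*n) (by omega) (by omega) (by omega)
  have P2 := i_pair hF9 hF3 (e := 8*n+1 ≤ m ∧ m ≤ 10*n) (by omega) (by omega) (by omega)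
  have P3 := i_pair hF4 hF10 (e := 10*n+1 ≤ m ∧ m ≤ 12*n) (by omega) (by omega) (by omega)
  have P4 := i_pair hE3 hE9 (e := 12*n+1 ≤ m ∧ m ≤ 14*n) (by omega) (by omega) (by omega)
  have hreg : (1 ≤ m ∧ m ≤ n) ∨ (n+1 ≤ m ∧ m ≤ 2*n) ∨ (2*n+1 ≤ m ∧ m ≤ 3*n) ∨ (3*n+1 ≤ m ∧ m ≤ 4*n) ∨ (4*n+1 ≤ m ∧ m ≤ 5*n) ∨ (5*n+1 ≤ m ∧ m ≤ 6*n) ∨ (6*n+1 ≤ m ∧ m ≤ 8*n) ∨ (8*n+1 ≤ m ∧ m ≤ 10*n) ∨ (10*n+1 ≤ m ∧ m ≤ 12*n) ∨ (12*n+1 ≤ m ∧ m ≤ 14*n) ∨ (14*n+1 ≤ m ∧ m ≤ 15*n) ∨ (15*n+1 ≤ m ∧ m ≤ 16*n) ∨ (16*n+1 ≤ m ∧ m ≤ 17*n) ∨ (17*n+1 ≤ m ∧ m ≤ 18*n) ∨ (18*n+1 ≤ m ∧ m ≤ 19*n) ∨ (19*n+1 ≤ m ∧ m ≤ 20*n)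 := by omega
  rcases hreg with hr|hr|hr|hr|hr|hr|hr|hr|hr|hr|hr|hr|hr|hr|hr|hr
  · have vE1 := i_one hE1 (by omega)
    have vF6 := i_zero hF6 (by omega)
    have vE8 := i_zero hE8 (by omega)
    have vF8 := i_zero hF8 (by omega)
    have vE11 := i_zero hE11 (by omega)
    have vF11 := i_zero hF11 (by omega)
    have vF1 := i_zero hF1 (by omega)
    have vE6 := i_zero hE6 (by omega)
    have vP1 := i_zero P1 (by omega)
    have vP2 := i_zero P2 (by omega)
    have vP3 := i_zero P3 (by omega)
    have vP4 := i_zero P4 (by omega)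
    have vE7 := i_zero hE7 (by omega)
    have vF12 := i_zero hF12 (by omega)
    have vE2 := i_zero hE2 (by omega)
    have vF2 := i_zero hF2 (by omega)
    have vE5 := i_zero hE5 (by omega)
    have vF5 := i_zero hF5 (by omega)
    have vF7 := i_zero hF7 (by omega)
    have vE12 := i_zero hE12 (by omega)
    split_ifs with hC <;> omega
  · have vE1 := i_zero hE1 (by omega)
    have vF6 := i_one hF6 (by omega)
    have vE8 := i_zero hE8 (by omega)
    have vF8 := i_zero hF8 (by omega)
    have vE11 := i_zero hE11 (by omega)
    have vF11 := i_zero hF11 (by omega)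
    have vF1 := i_zero hF1 (by omega)
    have vE6 := i_zero hE6 (by omega)
    have vP1 := i_zero P1 (by omega)
    have vP2 := i_zero P2 (by omega)
    have vP3 := i_zero P3 (by omega)
    have vP4 := i_zero P4 (by omega)
    have vE7 := i_zero hE7 (by omega)
    have vF12 := i_zero hF12 (by omega)
    have vE2 := i_zero hE2 (by omega)
    have vF2 := i_zero hF2 (by omega)
    have vE5 := i_zero hE5 (by omega)
    have vF5 := i_zero hF5 (by omega)
    have vF7 := i_zero hF7 (by omega)
    have vE12 := i_zero hE12 (by omega)
    split_ifs with hC <;> omega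
  · have vE1 := i_zero hE1 (by omega)
    have vF6 := i_zero hF6 (by omega)
    have vE8 := i_one hE8 (by omega)
    have vF8 := i_one hF8 (by omega)
    have vE11 := i_zero hE11 (by omega)
    have vF11 := i_zero hF11 (by omega)
    have vF1 := i_zero hF1 (by omega)
    have vE6 := i_zero hE6 (by omega)
    have vP1 := i_zero P1 (by omega)
    have vP2 := i_zero P2 (by omega)
    have vP3 := i_zero P3 (by omega)
    have vP4 := i_zero P4 (by omega)
    have vE7 := i_zero hE7 (by omega)
    have vF12 := i_zero hF12 (by omega)
    have vE2 := i_zero hE2 (by omega)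
    have vF2 := i_zero hF2 (by omega)
    have vE5 := i_zero hE5 (by omega)
    have vF5 := i_zero hF5 (by omega)
    have vF7 := i_zero hF7 (by omega)
    have vE12 := i_zero hE12 (by omega)
    split_ifs with hC <;> omega
  · have vE1 := i_zero hE1 (by omega)
    have vF6 := i_zero hF6 (by omega)
    have vE8 := i_zero hE8 (by omega)
    have vF8 := i_zero hF8 (by omega)
    have vE11 := i_one hE11 (by omega)
    have vF11 := i_one hF11 (by omega)
    have vF1 := i_zero hF1 (by omega)
    have vE6 := i_zero hE6 (by omega)
    have vP1 := i_zero P1 (by omega)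
    have vP2 := i_zero P2 (by omega)
    have vP3 := i_zero P3 (by omega)
    have vP4 := i_zero P4 (by omega)
    have vE7 := i_zero hE7 (by omega)
    have vF12 := i_zero hF12 (by omega)
    have vE2 := i_zero hE2 (by omega)
    have vF2 := i_zero hF2 (by omega)
    have vE5 := i_zero hE5 (by omega)
    have vF5 := i_zero hF5 (by omega)
    have vF7 := i_zero hF7 (by omega)
    have vE12 := i_zero hE12 (by omega)
    split_ifs with hC <;> omega
  · have vE1 := i_zero hE1 (by omega)
    have vF6 := i_zero hF6 (by omega)
    have vE8 := i_zero hE8 (by omega)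
    have vF8 := i_zero hF8 (by omega)
    have vE11 := i_zero hE11 (by omega)
    have vF11 := i_zero hF11 (by omega)
    have vF1 := i_one hF1 (by omega)
    have vE6 := i_zero hE6 (by omega)
    have vP1 := i_zero P1 (by omega)
    have vP2 := i_zero P2 (by omega)
    have vP3 := i_zero P3 (by omega)
    have vP4 := i_zero P4 (by omega)
    have vE7 := i_zero hE7 (by omega)
    have vF12 := i_zero hF12 (by omega)
    have vE2 := i_zero hE2 (by omega)
    have vF2 := i_zero hF2 (by omega)
    have vE5 := i_zero hE5 (by omega)
    have vF5 := i_zero hF5 (by omega)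
    have vF7 := i_zero hF7 (by omega)
    have vE12 := i_zero hE12 (by omega)
    split_ifs with hC <;> omega
  · have vE1 := i_zero hE1 (by omega)
    have vF6 := i_zero hF6 (by omega)
    have vE8 := i_zero hE8 (by omega)
    have vF8 := i_zero hF8 (by omega)
    have vE11 := i_zero hE11 (by omega)
    have vF11 := i_zero hF11 (by omega)
    have vF1 := i_zero hF1 (by omega)
    have vE6 := i_one hE6 (by omega)
    have vP1 := i_zero P1 (by omega)
    have vP2 := i_zero P2 (by omega)
    have vP3 := i_zero P3 (by omega)
    have vP4 := i_zero P4 (by omega)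
    have vE7 := i_zero hE7 (by omega)
    have vF12 := i_zero hF12 (by omega)
    have vE2 := i_zero hE2 (by omega)
    have vF2 := i_zero hF2 (by omega)
    have vE5 := i_zero hE5 (by omega)
    have vF5 := i_zero hF5 (by omega)
    have vF7 := i_zero hF7 (by omega)
    have vE12 := i_zero hE12 (by omega)
    split_ifs with hC <;> omega
  · have vE1 := i_zero hE1 (by omega)
    have vF6 := i_zero hF6 (by omega)
    have vE8 := i_zero hE8 (by omega)
    have vF8 := i_zero hF8 (by omega)
    have vE11 := i_zero hE11 (by omega)
    have vF11 := i_zero hF11 (by omega)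
    have vF1 := i_zero hF1 (by omega)
    have vE6 := i_zero hE6 (by omega)
    have vP1 := i_one P1 (by omega)
    have vP2 := i_zero P2 (by omega)
    have vP3 := i_zero P3 (by omega)
    have vP4 := i_zero P4 (by omega)
    have vE7 := i_zero hE7 (by omega)
    have vF12 := i_zero hF12 (by omega)
    have vE2 := i_zero hE2 (by omega)
    have vF2 := i_zero hF2 (by omega)
    have vE5 := i_zero hE5 (by omega)
    have vF5 := i_zero hF5 (by omega)
    have vF7 := i_zero hF7 (by omega)
    have vE12 := i_zero hE12 (by omega)
    split_ifs with hC <;> omega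
  · have vE1 := i_zero hE1 (by omega)
    have vF6 := i_zero hF6 (by omega)
    have vE8 := i_zero hE8 (by omega)
    have vF8 := i_zero hF8 (by omega)
    have vE11 := i_zero hE11 (by omega)
    have vF11 := i_zero hF11 (by omega)
    have vF1 := i_zero hF1 (by omega)
    have vE6 := i_zero hE6 (by omega)
    have vP1 := i_zero P1 (by omega)
    have vP2 := i_one P2 (by omega)
    have vP3 := i_zero P3 (by omega)
    have vP4 := i_zero P4 (by omega)
    have vE7 := i_zero hE7 (by omega)
    have vF12 := i_zero hF12 (by omega)
    have vE2 := i_zero hE2 (by omega)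
    have vF2 := i_zero hF2 (by omega)
    have vE5 := i_zero hE5 (by omega)
    have vF5 := i_zero hF5 (by omega)
    have vF7 := i_zero hF7 (by omega)
    have vE12 := i_zero hE12 (by omega)
    split_ifs with hC <;> omega
  · have vE1 := i_zero hE1 (by omega)
    have vF6 := i_zero hF6 (by omega)
    have vE8 := i_zero hE8 (by omega)
    have vF8 := i_zero hF8 (by omega)
    have vE11 := i_zero hE11 (by omega)
    have vF11 := i_zero hF11 (by omega)
    have vF1 := i_zero hF1 (by omega)
    have vE6 := i_zero hE6 (by omega)
    have vP1 := i_zero P1 (by omega)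
    have vP2 := i_zero P2 (by omega)
    have vP3 := i_one P3 (by omega)
    have vP4 := i_zero P4 (by omega)
    have vE7 := i_zero hE7 (by omega)
    have vF12 := i_zero hF12 (by omega)
    have vE2 := i_zero hE2 (by omega)
    have vF2 := i_zero hF2 (by omega)
    have vE5 := i_zero hE5 (by omega)
    have vF5 := i_zero hF5 (by omega)
    have vF7 := i_zero hF7 (by omega)
    have vE12 := i_zero hE12 (by omega)
    split_ifs with hC <;> omega
  · have vE1 := i_zero hE1 (by omega)
    have vF6 := i_zero hF6 (by omega)
    have vE8 := i_zero hE8 (by omega)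
    have vF8 := i_zero hF8 (by omega)
    have vE11 := i_zero hE11 (by omega)
    have vF11 := i_zero hF11 (by omega)
    have vF1 := i_zero hF1 (by omega)
    have vE6 := i_zero hE6 (by omega)
    have vP1 := i_zero P1 (by omega)
    have vP2 := i_zero P2 (by omega)
    have vP3 := i_zero P3 (by omega)
    have vP4 := i_one P4 (by omega)
    have vE7 := i_zero hE7 (by omega)
    have vF12 := i_zero hF12 (by omega)
    have vE2 := i_zero hE2 (by omega)
    have vF2 := i_zero hF2 (by omega)
    have vE5 := i_zero hE5 (by omega)
    have vF5 := i_zero hF5 (by omega)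
    have vF7 := i_zero hF7 (by omega)
    have vE12 := i_zero hE12 (by omega)
    split_ifs with hC <;> omega
  · have vE1 := i_zero hE1 (by omega)
    have vF6 := i_zero hF6 (by omega)
    have vE8 := i_zero hE8 (by omega)
    have vF8 := i_zero hF8 (by omega)
    have vE11 := i_zero hE11 (by omega)
    have vF11 := i_zero hF11 (by omega)
    have vF1 := i_zero hF1 (by omega)
    have vE6 := i_zero hE6 (by omega)
    have vP1 := i_zero P1 (by omega)
    have vP2 := i_zero P2 (by omega)
    have vP3 := i_zero P3 (by omega)
    have vP4 := i_zero P4 (by omega)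
    have vE7 := i_one hE7 (by omega)
    have vF12 := i_zero hF12 (by omega)
    have vE2 := i_zero hE2 (by omega)
    have vF2 := i_zero hF2 (by omega)
    have vE5 := i_zero hE5 (by omega)
    have vF5 := i_zero hF5 (by omega)
    have vF7 := i_zero hF7 (by omega)
    have vE12 := i_zero hE12 (by omega)
    split_ifs with hC <;> omega
  · have vE1 := i_zero hE1 (by omega)
    have vF6 := i_zero hF6 (by omega)
    have vE8 := i_zero hE8 (by omega)
    have vF8 := i_zero hF8 (by omega)
    have vE11 := i_zero hE11 (by omega)
    have vF11 := i_zero hF11 (by omega)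
    have vF1 := i_zero hF1 (by omega)
    have vE6 := i_zero hE6 (by omega)
    have vP1 := i_zero P1 (by omega)
    have vP2 := i_zero P2 (by omega)
    have vP3 := i_zero P3 (by omega)
    have vP4 := i_zero P4 (by omega)
    have vE7 := i_zero hE7 (by omega)
    have vF12 := i_one hF12 (by omega)
    have vE2 := i_zero hE2 (by omega)
    have vF2 := i_zero hF2 (by omega)
    have vE5 := i_zero hE5 (by omega)
    have vF5 := i_zero hF5 (by omega)
    have vF7 := i_zero hF7 (by omega)
    have vE12 := i_zero hE12 (by omega)
    split_ifs with hC <;> omega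
  · have vE1 := i_zero hE1 (by omega)
    have vF6 := i_zero hF6 (by omega)
    have vE8 := i_zero hE8 (by omega)
    have vF8 := i_zero hF8 (by omega)
    have vE11 := i_zero hE11 (by omega)
    have vF11 := i_zero hF11 (by omega)
    have vF1 := i_zero hF1 (by omega)
    have vE6 := i_zero hE6 (by omega)
    have vP1 := i_zero P1 (by omega)
    have vP2 := i_zero P2 (by omega)
    have vP3 := i_zero P3 (by omega)
    have vP4 := i_zero P4 (by omega)
    have vE7 := i_zero hE7 (by omega)
    have vF12 := i_zero hF12 (by omega)
    have vE2 := i_one hE2 (by omega)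
    have vF2 := i_one hF2 (by omega)
    have vE5 := i_zero hE5 (by omega)
    have vF5 := i_zero hF5 (by omega)
    have vF7 := i_zero hF7 (by omega)
    have vE12 := i_zero hE12 (by omega)
    split_ifs with hC <;> omega
  · have vE1 := i_zero hE1 (by omega)
    have vF6 := i_zero hF6 (by omega)
    have vE8 := i_zero hE8 (by omega)
    have vF8 := i_zero hF8 (by omega)
    have vE11 := i_zero hE11 (by omega)
    have vF11 := i_zero hF11 (by omega)
    have vF1 := i_zero hF1 (by omega)
    have vE6 := i_zero hE6 (by omega)
    have vP1 := i_zero P1 (by omega)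
    have vP2 := i_zero P2 (by omega)
    have vP3 := i_zero P3 (by omega)
    have vP4 := i_zero P4 (by omega)
    have vE7 := i_zero hE7 (by omega)
    have vF12 := i_zero hF12 (by omega)
    have vE2 := i_zero hE2 (by omega)
    have vF2 := i_zero hF2 (by omega)
    have vE5 := i_one hE5 (by omega)
    have vF5 := i_one hF5 (by omega)
    have vF7 := i_zero hF7 (by omega)
    have vE12 := i_zero hE12 (by omega)
    split_ifs with hC <;> omega
  · have vE1 := i_zero hE1 (by omega)
    have vF6 := i_zero hF6 (by omega)
    have vE8 := i_zero hE8 (by omega)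
    have vF8 := i_zero hF8 (by omega)
    have vE11 := i_zero hE11 (by omega)
    have vF11 := i_zero hF11 (by omega)
    have vF1 := i_zero hF1 (by omega)
    have vE6 := i_zero hE6 (by omega)
    have vP1 := i_zero P1 (by omega)
    have vP2 := i_zero P2 (by omega)
    have vP3 := i_zero P3 (by omega)
    have vP4 := i_zero P4 (by omega)
    have vE7 := i_zero hE7 (by omega)
    have vF12 := i_zero hF12 (by omega)
    have vE2 := i_zero hE2 (by omega)
    have vF2 := i_zero hF2 (by omega)
    have vE5 := i_zero hE5 (by omega)
    have vF5 := i_zero hF5 (by omega)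
    have vF7 := i_one hF7 (by omega)
    have vE12 := i_zero hE12 (by omega)
    split_ifs with hC <;> omega
  · have vE1 := i_zero hE1 (by omega)
    have vF6 := i_zero hF6 (by omega)
    have vE8 := i_zero hE8 (by omega)
    have vF8 := i_zero hF8 (by omega)
    have vE11 := i_zero hE11 (by omega)
    have vF11 := i_zero hF11 (by omega)
    have vF1 := i_zero hF1 (by omega)
    have vE6 := i_zero hE6 (by omega)
    have vP1 := i_zero P1 (by omega)
    have vP2 := i_zero P2 (by omega)
    have vP3 := i_zero P3 (by omega)
    have vP4 := i_zero P4 (by omega)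
    have vE7 := i_zero hE7 (by omega)
    have vF12 := i_zero hF12 (by omega)
    have vE2 := i_zero hE2 (by omega)
    have vF2 := i_zero hF2 (by omega)
    have vE5 := i_zero hE5 (by omega)
    have vF5 := i_zero hF5 (by omega)
    have vF7 := i_zero hF7 (by omega)
    have vE12 := i_one hE12 (by omega)
    split_ifs with hC <;> omega

set_option maxHeartbeats 4000000 in
theorem paper_stmt (n : ℤ) (hn : 1 ≤ n) (T : ℤ → ℤ → ℤ)
    (hT1 : ∀ a : ℤ, 1 ≤ a → a ≤ n →
      T a 1 = a ∧ T a 2 = 16*n + a ∧ T a 3 = 14*n + 1 - 2*a ∧ T a 4 = 6*n + 2*a ∧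
      T a 5 = 18*n + 1 - a ∧ T a 6 = 6*n + 1 - a ∧ T a 7 = 14*n + a ∧ T a 8 = 2*n + a ∧
      T a 9 = 14*n + 2 - 2*a ∧ T a 10 = 6*n - 1 + 2*a ∧ T a 11 = 4*n + 1 - a ∧
      T a 12 = 20*n + 1 - a)
    (hT2 : ∀ b : ℤ, 1 ≤ b → b ≤ n →
      T (n + b) 1 = 4*n + b ∧ T (n + b) 2 = 16*n + b ∧ T (n + b) 3 = 10*n + 2 - 2*b ∧
      T (n + b) 4 = 10*n - 1 + 2*b ∧ T (n + b) 5 = 18*n + 1 - b ∧ T (n + b) 6 = 2*n + 1 - b ∧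
      T (n + b) 7 = 18*n + b ∧ T (n + b) 8 = 2*n + b ∧ T (n + b) 9 = 10*n + 1 - 2*b ∧
      T (n + b) 10 = 10*n + 2*b ∧ T (n + b) 11 = 4*n + 1 - b ∧ T (n + b) 12 = 16*n + 1 - b)
    :
    (∀ a : ℤ, 1 ≤ a → a ≤ n →
      T a 2 = T (n + a) 2 ∧ T a 5 = T (n + a) 5 ∧ T a 8 = T (n + a) 8 ∧
      T a 11 = T (n + a) 11) ∧
    (∀ m : ℤ, 1 ≤ m → m ≤ 20*n →
      (((Finset.Icc (1 : ℤ) (2*n)) ×ˢ (Finset.Icc (1 : ℤ) 12)).filter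
          (fun p => T p.1 p.2 = m)).card =
        (if (2*n + 1 ≤ m ∧ m ≤ 4*n) ∨ (16*n + 1 ≤ m ∧ m ≤ 18*n) then 2 else 1)) := by
  have k2 : ∀ a : ℤ, n+1 ≤ a → a ≤ 2*n →
      T a 1 = 3*n + a ∧ T a 2 = 15*n + a ∧ T a 3 = 12*n + 2 - 2*a ∧ T a 4 = 8*n - 1 + 2*a ∧ T a 5 = 19*n + 1 - a ∧ T a 6 = 3*n + 1 - a ∧ T a 7 = 17*n + a ∧ T a 8 = n + a ∧ T a 9 = 12*n + 1 - 2*a ∧ T a 10 = 8*n + 2*a ∧ T a 11 = 5*n + 1 - a ∧ T a 12 = 17*n + 1 - a := by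
    intro a h1 h2
    have h := hT2 (a-n) (by omega) (by omega)
    rw [show n + (a-n) = a by ring] at h
    obtain ⟨g1,g2,g3,g4,g5,g6,g7,g8,g9,g10,g11,g12⟩ := h
    exact ⟨by rw [g1]; ring, by rw [g2]; ring, by rw [g3]; ring, by rw [g4]; ring, by rw [g5]; ring, by rw [g6]; ring, by rw [g7]; ring, by rw [g8]; ring, by rw [g9]; ring, by rw [g10]; ring, by rw [g11]; ring, by rw [g12]; ring⟩
  constructor
  · intro a h1 h2
    have e := hT1 a h1 h2
    have f := hT2 a h1 h2
    exact ⟨e.2.1.trans f.2.1.symm,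
      (e.2.2.2.2.1).trans (f.2.2.2.2.1).symm,
      (e.2.2.2.2.2.2.2.1).trans (f.2.2.2.2.2.2.2.1).symm,
      (e.2.2.2.2.2.2.2.2.2.2.1).trans (f.2.2.2.2.2.2.2.2.2.2.1).symm⟩
  · intro m hm1 hm2
    have HE1 : ∀ a : ℤ, 1 ≤ a → a ≤ n → (T a 1 = m ↔ a = m) :=
      fun a ha1 ha2 => by rw [(hT1 a ha1 ha2).1]
    have HE2 : ∀ a : ℤ, 1 ≤ a → a ≤ n → (T a 2 = m ↔ a = m - (16*n)) :=
      fun a ha1 ha2 => by rw [(hT1 a ha1 ha2).2.1]; exact iff1 (16*n) m a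
    have HE3 : ∀ a : ℤ, 1 ≤ a → a ≤ n → (T a 3 = m ↔ 2*a = 14*n + 1 - m) :=
      fun a ha1 ha2 => by rw [(hT1 a ha1 ha2).2.2.1]; exact iff2' (14*n + 1) m a
    have HE4 : ∀ a : ℤ, 1 ≤ a → a ≤ n → (T a 4 = m ↔ 2*a = m - (6*n)) :=
      fun a ha1 ha2 => by rw [(hT1 a ha1 ha2).2.2.2.1]; exact iff2 (6*n) m a
    have HE5 : ∀ a : ℤ, 1 ≤ a → a ≤ n → (T a 5 = m ↔ a = 18*n + 1 - m) :=
      fun a ha1 ha2 => by rw [(hT1 a ha1 ha2).2.2.2.2.1]; exact iff1' (18*n + 1) m a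
    have HE6 : ∀ a : ℤ, 1 ≤ a → a ≤ n → (T a 6 = m ↔ a = 6*n + 1 - m) :=
      fun a ha1 ha2 => by rw [(hT1 a ha1 ha2).2.2.2.2.2.1]; exact iff1' (6*n + 1) m a
    have HE7 : ∀ a : ℤ, 1 ≤ a → a ≤ n → (T a 7 = m ↔ a = m - (14*n)) :=
      fun a ha1 ha2 => by rw [(hT1 a ha1 ha2).2.2.2.2.2.2.1]; exact iff1 (14*n) m a
    have HE8 : ∀ a : ℤ, 1 ≤ a → a ≤ n → (T a 8 = m ↔ a = m - (2*n)) :=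
      fun a ha1 ha2 => by rw [(hT1 a ha1 ha2).2.2.2.2.2.2.2.1]; exact iff1 (2*n) m a
    have HE9 : ∀ a : ℤ, 1 ≤ a → a ≤ n → (T a 9 = m ↔ 2*a = 14*n + 2 - m) :=
      fun a ha1 ha2 => by rw [(hT1 a ha1 ha2).2.2.2.2.2.2.2.2.1]; exact iff2' (14*n + 2) m a
    have HE10 : ∀ a : ℤ, 1 ≤ a → a ≤ n → (T a 10 = m ↔ 2*a = m - (6*n - 1)) :=
      fun a ha1 ha2 => by rw [(hT1 a ha1 ha2).2.2.2.2.2.2.2.2.2.1]; exact iff2 (6*n - 1) m a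
    have HE11 : ∀ a : ℤ, 1 ≤ a → a ≤ n → (T a 11 = m ↔ a = 4*n + 1 - m) :=
      fun a ha1 ha2 => by rw [(hT1 a ha1 ha2).2.2.2.2.2.2.2.2.2.2.1]; exact iff1' (4*n + 1) m a
    have HE12 : ∀ a : ℤ, 1 ≤ a → a ≤ n → (T a 12 = m ↔ a = 20*n + 1 - m) :=
      fun a ha1 ha2 => by rw [(hT1 a ha1 ha2).2.2.2.2.2.2.2.2.2.2.2]; exact iff1' (20*n + 1) m a
    have HF1 : ∀ a : ℤ, (n+1) ≤ a → a ≤ (2*n) → (T a 1 = m ↔ a = m - (3*n)) :=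
      fun a ha1 ha2 => by rw [(k2 a ha1 ha2).1]; exact iff1 (3*n) m a
    have HF2 : ∀ a : ℤ, (n+1) ≤ a → a ≤ (2*n) → (T a 2 = m ↔ a = m - (15*n)) :=
      fun a ha1 ha2 => by rw [(k2 a ha1 ha2).2.1]; exact iff1 (15*n) m a
    have HF3 : ∀ a : ℤ, (n+1) ≤ a → a ≤ (2*n) → (T a 3 = m ↔ 2*a = 12*n + 2 - m) :=
      fun a ha1 ha2 => by rw [(k2 a ha1 ha2).2.2.1]; exact iff2' (12*n + 2) m a
    have HF4 : ∀ a : ℤ, (n+1) ≤ a → a ≤ (2*n) → (T a 4 = m ↔ 2*a = m - (8*n - 1)) :=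
      fun a ha1 ha2 => by rw [(k2 a ha1 ha2).2.2.2.1]; exact iff2 (8*n - 1) m a
    have HF5 : ∀ a : ℤ, (n+1) ≤ a → a ≤ (2*n) → (T a 5 = m ↔ a = 19*n + 1 - m) :=
      fun a ha1 ha2 => by rw [(k2 a ha1 ha2).2.2.2.2.1]; exact iff1' (19*n + 1) m a
    have HF6 : ∀ a : ℤ, (n+1) ≤ a → a ≤ (2*n) → (T a 6 = m ↔ a = 3*n + 1 - m) :=
      fun a ha1 ha2 => by rw [(k2 a ha1 ha2).2.2.2.2.2.1]; exact iff1' (3*n + 1) m a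
    have HF7 : ∀ a : ℤ, (n+1) ≤ a → a ≤ (2*n) → (T a 7 = m ↔ a = m - (17*n)) :=
      fun a ha1 ha2 => by rw [(k2 a ha1 ha2).2.2.2.2.2.2.1]; exact iff1 (17*n) m a
    have HF8 : ∀ a : ℤ, (n+1) ≤ a → a ≤ (2*n) → (T a 8 = m ↔ a = m - (n)) :=
      fun a ha1 ha2 => by rw [(k2 a ha1 ha2).2.2.2.2.2.2.2.1]; exact iff1 (n) m a
    have HF9 : ∀ a : ℤ, (n+1) ≤ a → a ≤ (2*n) → (T a 9 = m ↔ 2*a = 12*n + 1 - m) :=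
      fun a ha1 ha2 => by rw [(k2 a ha1 ha2).2.2.2.2.2.2.2.2.1]; exact iff2' (12*n + 1) m a
    have HF10 : ∀ a : ℤ, (n+1) ≤ a → a ≤ (2*n) → (T a 10 = m ↔ 2*a = m - (8*n)) :=
      fun a ha1 ha2 => by rw [(k2 a ha1 ha2).2.2.2.2.2.2.2.2.2.1]; exact iff2 (8*n) m a
    have HF11 : ∀ a : ℤ, (n+1) ≤ a → a ≤ (2*n) → (T a 11 = m ↔ a = 5*n + 1 - m) :=
      fun a ha1 ha2 => by rw [(k2 a ha1 ha2).2.2.2.2.2.2.2.2.2.2.1]; exact iff1' (5*n + 1) m a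
    have HF12 : ∀ a : ℤ, (n+1) ≤ a → a ≤ (2*n) → (T a 12 = m ↔ a = 17*n + 1 - m) :=
      fun a ha1 ha2 => by rw [(k2 a ha1 ha2).2.2.2.2.2.2.2.2.2.2.2]; exact iff1' (17*n + 1) m a
    have hsum : (((Finset.Icc (1 : ℤ) (2*n)) ×ˢ (Finset.Icc (1 : ℤ) 12)).filter
          (fun p => T p.1 p.2 = m)).card =
        ∑ j ∈ Finset.Icc (1:ℤ) 12,
          ((Finset.Icc (1:ℤ) (2*n)).filter (fun a => T a j = m)).card := by
      rw [Finset.card_filter, Finset.sum_product, Finset.sum_comm]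
      refine Finset.sum_congr rfl fun j _ => ?_
      rw [Finset.card_filter]
    rw [hsum,
      show Finset.Icc (1:ℤ) 12 = {1,2,3,4,5,6,7,8,9,10,11,12} from by decide,
      Finset.sum_insert (by decide), Finset.sum_insert (by decide),
      Finset.sum_insert (by decide), Finset.sum_insert (by decide),
      Finset.sum_insert (by decide), Finset.sum_insert (by decide),
      Finset.sum_insert (by decide), Finset.sum_insert (by decide),
      Finset.sum_insert (by decide), Finset.sum_insert (by decide),
      Finset.sum_insert (by decide), Finset.sum_singleton]
    simp only [card_split n hn]
    have E1 := cnt 1 n (m) (fun a => T a 1 = m) HE1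
    have E2 := cnt 1 n (m - (16*n)) (fun a => T a 2 = m) HE2
    have E3 := cnt2 1 n (14*n + 1 - m) (fun a => T a 3 = m) HE3
    have E4 := cnt2 1 n (m - (6*n)) (fun a => T a 4 = m) HE4
    have E5 := cnt 1 n (18*n + 1 - m) (fun a => T a 5 = m) HE5
    have E6 := cnt 1 n (6*n + 1 - m) (fun a => T a 6 = m) HE6
    have E7 := cnt 1 n (m - (14*n)) (fun a => T a 7 = m) HE7
    have E8 := cnt 1 n (m - (2*n)) (fun a => T a 8 = m) HE8
    have E9 := cnt2 1 n (14*n + 2 - m) (fun a => T a 9 = m) HE9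
    have E10 := cnt2 1 n (m - (6*n - 1)) (fun a => T a 10 = m) HE10
    have E11 := cnt 1 n (4*n + 1 - m) (fun a => T a 11 = m) HE11
    have E12 := cnt 1 n (20*n + 1 - m) (fun a => T a 12 = m) HE12
    have F1 := cnt (n+1) (2*n) (m - (3*n)) (fun a => T a 1 = m) HF1
    have F2 := cnt (n+1) (2*n) (m - (15*n)) (fun a => T a 2 = m) HF2
    have F3 := cnt2 (n+1) (2*n) (12*n + 2 - m) (fun a => T a 3 = m) HF3
    have F4 := cnt2 (n+1) (2*n) (m - (8*n - 1)) (fun a => T a 4 = m) HF4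
    have F5 := cnt (n+1) (2*n) (19*n + 1 - m) (fun a => T a 5 = m) HF5
    have F6 := cnt (n+1) (2*n) (3*n + 1 - m) (fun a => T a 6 = m) HF6
    have F7 := cnt (n+1) (2*n) (m - (17*n)) (fun a => T a 7 = m) HF7
    have F8 := cnt (n+1) (2*n) (m - (n)) (fun a => T a 8 = m) HF8
    have F9 := cnt2 (n+1) (2*n) (12*n + 1 - m) (fun a => T a 9 = m) HF9
    have F10 := cnt2 (n+1) (2*n) (m - (8*n)) (fun a => T a 10 = m) HF10
    have F11 := cnt (n+1) (2*n) (5*n + 1 - m) (fun a => T a 11 = m) HF11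
    have F12 := cnt (n+1) (2*n) (17*n + 1 - m) (fun a => T a 12 = m) HF12
    exact assemble n m hn hm1 hm2 _ _ _ _ _ _ _ _ _ _ _ _ _ _ _ _ _ _ _ _ _ _ _ _
      E1 E2 E3 E4 E5 E6 E7 E8 E9 E10 E11 E12 F1 F2 F3 F4 F5 F6 F7 F8 F9 F10 F11 F12
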